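/- Let X be a Poisson random variable with parameter λ > 0 and let 0 < α ≤ 1. Then |E[X^α] − λ^α| ≤ min{λ^α, λ^{α−1}}; moreover E[X^α] ≤ λ^α, so the difference λ^α − E[X^α] is nonnegative. -/

import Mathlib

open Real

/-- The probability mass function of the Poisson distribution with parameter `lam`. -/
noncomputable def poissonPMF (lam : ℝ) (i : ℕ) : ℝ :=
  Real.exp (-lam) * lam ^ i / (Nat.factorial i)

/-- The expectation of `f X` where `X ~ Poisson(lam)`. -/
noncomputable def poissonE (lam : ℝ) (f : ℕ → ℝ) : ℝ :=
  ∑' i : ℕ, poissonPMF lam i * f i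

/-!
Both bounds are Jensen's inequality in tangent-line form. The map `x ↦ x ^ α` is concave, so
`X ^ α` lies below its tangent at `λ`, whose expectation is `λ ^ α`. For the lower bound, the
Stein–Chen identity `E[f X] = λ E[f (X + 1) / (X + 1)]` (for `f 0 = 0`) gives
`E[X ^ α] = λ E[(X + 1) ^ (α - 1)]`; the map `x ↦ x ^ (α - 1)` is convex, so this is at least
`λ (λ + 1) ^ (α - 1)`, and the tangent of the same map at `λ` bounds that below by
`λ ^ α + (α - 1) λ ^ (α - 1) ≥ λ ^ α - λ ^ (α - 1)`.
-/

namespace Real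

lemma one_add_mul_sub_one_le_rpow_of_nonpos {t p : ℝ} (ht : 0 < t) (hp : p ≤ 0) :
    1 + p * (t - 1) ≤ t ^ p := by
  -- Bernoulli with exponent `1 - p ≥ 1` at `t⁻¹`, multiplied by `t`.
  have h := one_add_mul_self_le_rpow_one_add (s := t⁻¹ - 1) (by linarith [inv_pos.2 ht])
    (p := 1 - p) (by linarith)
  rw [add_sub_cancel, inv_rpow ht.le, ← rpow_neg ht.le, neg_sub, rpow_sub_one ht.ne',
    le_div_iff₀ ht] at h
  calc 1 + p * (t - 1) = (1 + (1 - p) * (t⁻¹ - 1)) * t := by field_simp; ring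
    _ ≤ t ^ p := h

lemma rpow_tangent_eq {x y : ℝ} (hy : 0 < y) (p : ℝ) :
    y ^ p + p * y ^ (p - 1) * (x - y) = y ^ p * (1 + p * (x / y - 1)) := by
  rw [rpow_sub_one hy.ne']
  field_simp

lemma rpow_le_rpow_add_mul_sub {x y p : ℝ} (hx : 0 ≤ x) (hy : 0 < y) (hp₀ : 0 ≤ p)
    (hp₁ : p ≤ 1) :
    x ^ p ≤ y ^ p + p * y ^ (p - 1) * (x - y) := by
  have h := rpow_one_add_le_one_add_mul_self (s := x / y - 1) (by linarith [div_nonneg hx hy.le])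
    hp₀ hp₁
  rw [add_sub_cancel, div_rpow hx hy.le, div_le_iff₀' (rpow_pos_of_pos hy p)] at h
  rwa [rpow_tangent_eq hy]

lemma rpow_add_mul_sub_le_rpow {x y p : ℝ} (hx : 0 < x) (hy : 0 < y) (hp : p ≤ 0) :
    y ^ p + p * y ^ (p - 1) * (x - y) ≤ x ^ p := by
  have h := one_add_mul_sub_one_le_rpow_of_nonpos (div_pos hx hy) hp
  rw [div_rpow hx.le hy.le, le_div_iff₀' (rpow_pos_of_pos hy p)] at h
  rwa [rpow_tangent_eq hy]

end Real

section Poisson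

variable {lam : ℝ}

lemma poissonPMF_nonneg (hlam : 0 ≤ lam) (n : ℕ) : 0 ≤ poissonPMF lam n := by
  unfold poissonPMF
  positivity

lemma hasSum_poissonPMF (lam : ℝ) : HasSum (poissonPMF lam) 1 := by
  have h := (NormedSpace.expSeries_div_hasSum_exp lam).mul_left (exp (-lam))
  rw [← exp_eq_exp_ℝ, ← exp_add, neg_add_cancel, exp_zero] at h
  exact h.congr_fun fun n => mul_div_assoc _ _ _

lemma poissonPMF_succ_mul (lam : ℝ) (n : ℕ) :
    poissonPMF lam (n + 1) * (n + 1) = lam * poissonPMF lam n := by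
  rw [poissonPMF, poissonPMF, Nat.factorial_succ, Nat.cast_mul, pow_succ]
  push_cast
  field_simp

lemma hasSum_poissonPMF_mul_of_hasSum_div_succ {f : ℕ → ℝ} (hf : f 0 = 0) {s : ℝ}
    (h : HasSum (fun n => poissonPMF lam n * (f (n + 1) / (n + 1))) s) :
    HasSum (fun n => poissonPMF lam n * f n) (lam * s) := by
  have hshift : HasSum (fun n => poissonPMF lam (n + 1) * f (n + 1)) (lam * s) := by
    refine (h.mul_left lam).congr_fun fun n => ?_
    rw [← mul_assoc, ← poissonPMF_succ_mul, mul_assoc, mul_div_cancel₀ _ (by positivity)]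
  have := (hasSum_nat_add_iff (f := fun n => poissonPMF lam n * f n) 1).mp hshift
  rwa [Finset.sum_range_one, hf, mul_zero, add_zero] at this

lemma hasSum_poissonPMF_mul_cast (lam : ℝ) : HasSum (fun n => poissonPMF lam n * n) lam := by
  simpa using hasSum_poissonPMF_mul_of_hasSum_div_succ (f := fun n => (n : ℝ)) Nat.cast_zero
    ((hasSum_poissonPMF lam).congr_fun fun n => by push_cast; field_simp)

lemma hasSum_poissonPMF_mul_affine (lam c d : ℝ) :
    HasSum (fun n => poissonPMF lam n * (c + d * (n - lam))) c := by
  have h := ((hasSum_poissonPMF lam).mul_left (c - d * lam)).add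
    ((hasSum_poissonPMF_mul_cast lam).mul_left d)
  rw [mul_one, sub_add_cancel] at h
  exact h.congr_fun fun n => by ring

lemma poissonE_nonneg (hlam : 0 ≤ lam) {f : ℕ → ℝ} (hf : ∀ n, 0 ≤ f n) :
    0 ≤ poissonE lam f :=
  tsum_nonneg fun n => mul_nonneg (poissonPMF_nonneg hlam n) (hf n)

lemma poissonE_le_of_le_affine (hlam : 0 ≤ lam) {f : ℕ → ℝ} {c d : ℝ}
    (hf₀ : ∀ n, 0 ≤ f n) (hf : ∀ n, f n ≤ c + d * (n - lam)) : poissonE lam f ≤ c := by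
  have hle n := mul_le_mul_of_nonneg_left (hf n) (poissonPMF_nonneg hlam n)
  have hsum := (hasSum_poissonPMF_mul_affine lam c d).summable.of_nonneg_of_le
    (fun n => mul_nonneg (poissonPMF_nonneg hlam n) (hf₀ n)) hle
  exact hasSum_le hle hsum.hasSum (hasSum_poissonPMF_mul_affine lam c d)

lemma le_poissonE_of_affine_le (hlam : 0 ≤ lam) {f : ℕ → ℝ} {c d : ℝ}
    (hf : Summable fun n => poissonPMF lam n * f n) (h : ∀ n, c + d * (n - lam) ≤ f n) :
    c ≤ poissonE lam f :=
  hasSum_le (fun n => mul_le_mul_of_nonneg_left (h n) (poissonPMF_nonneg hlam n))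
    (hasSum_poissonPMF_mul_affine lam c d) hf.hasSum

end Poisson

section PoissonRpow

variable {lam α : ℝ}

lemma poissonE_rpow_le (hlam : 0 < lam) (hα₀ : 0 ≤ α) (hα₁ : α ≤ 1) :
    poissonE lam (fun i => (i : ℝ) ^ α) ≤ lam ^ α :=
  poissonE_le_of_le_affine hlam.le (fun n : ℕ => rpow_nonneg n.cast_nonneg α)
    fun n => rpow_le_rpow_add_mul_sub n.cast_nonneg hlam hα₀ hα₁

lemma summable_poissonPMF_mul_add_one_rpow (hlam : 0 ≤ lam) {p : ℝ} (hp : p ≤ 0) :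
    Summable fun n : ℕ => poissonPMF lam n * ((n : ℝ) + 1) ^ p := by
  have hle (n : ℕ) : ((n : ℝ) + 1) ^ p ≤ 1 :=
    rpow_le_one_of_one_le_of_nonpos (by linarith [n.cast_nonneg (α := ℝ)]) hp
  refine (hasSum_poissonPMF lam).summable.of_nonneg_of_le
    (fun n => mul_nonneg (poissonPMF_nonneg hlam n) (by positivity)) fun n => ?_
  simpa using mul_le_mul_of_nonneg_left (hle n) (poissonPMF_nonneg hlam n)

lemma poissonE_rpow_eq_mul (hlam : 0 ≤ lam) (hα₀ : α ≠ 0) (hα₁ : α ≤ 1) :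
    poissonE lam (fun i => (i : ℝ) ^ α) =
      lam * poissonE lam (fun i => ((i : ℝ) + 1) ^ (α - 1)) := by
  refine (hasSum_poissonPMF_mul_of_hasSum_div_succ (f := fun i => (i : ℝ) ^ α) ?_ ?_).tsum_eq
  · simp [zero_rpow hα₀]
  · refine (summable_poissonPMF_mul_add_one_rpow hlam (by linarith)).hasSum.congr_fun fun n => ?_
    push_cast
    rw [rpow_sub_one n.cast_add_one_ne_zero]

lemma add_one_rpow_le_poissonE (hlam : 0 ≤ lam) {p : ℝ} (hp : p ≤ 0) :
    (lam + 1) ^ p ≤ poissonE lam (fun i => ((i : ℝ) + 1) ^ p) :=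
  le_poissonE_of_affine_le hlam (summable_poissonPMF_mul_add_one_rpow hlam hp) fun n => by
    simpa using rpow_add_mul_sub_le_rpow (x := (n : ℝ) + 1) (y := lam + 1) (by positivity)
      (by positivity) hp

lemma rpow_sub_rpow_sub_one_le_mul_add_one_rpow (hlam : 0 < lam) (hα₀ : 0 ≤ α)
    (hα₁ : α ≤ 1) :
    lam ^ α - lam ^ (α - 1) ≤ lam * (lam + 1) ^ (α - 1) := by
  have htangent := rpow_add_mul_sub_le_rpow (x := lam + 1) (by positivity) hlam
    (show α - 1 ≤ 0 by linarith)
  rw [rpow_sub_one hlam.ne' (α - 1), add_sub_cancel_left, mul_one] at htangent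
  calc lam ^ α - lam ^ (α - 1) ≤ lam ^ α + (α - 1) * lam ^ (α - 1) := by
        linarith [mul_nonneg hα₀ (rpow_pos_of_pos hlam (α - 1)).le]
    _ = lam * (lam ^ (α - 1) + (α - 1) * (lam ^ (α - 1) / lam)) := by
      rw [rpow_sub_one hlam.ne']; field_simp
    _ ≤ lam * (lam + 1) ^ (α - 1) := mul_le_mul_of_nonneg_left htangent hlam.le

end PoissonRpow

theorem poisson_rpow_bias_bound_le_one (lam : ℝ) (hlam : 0 < lam)
    (α : ℝ) (hα0 : 0 < α) (hα1 : α ≤ 1) :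
    |poissonE lam (fun i => (i : ℝ) ^ α) - lam ^ α| ≤ min (lam ^ α) (lam ^ (α - 1)) ∧
    poissonE lam (fun i => (i : ℝ) ^ α) ≤ lam ^ α := by
  have hupper := poissonE_rpow_le hlam hα0.le hα1
  have hlower : lam ^ α - lam ^ (α - 1) ≤ poissonE lam (fun i => (i : ℝ) ^ α) :=
    calc lam ^ α - lam ^ (α - 1) ≤ lam * (lam + 1) ^ (α - 1) :=
          rpow_sub_rpow_sub_one_le_mul_add_one_rpow hlam hα0.le hα1
      _ ≤ lam * poissonE lam (fun i => ((i : ℝ) + 1) ^ (α - 1)) :=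
          mul_le_mul_of_nonneg_left (add_one_rpow_le_poissonE hlam.le (by linarith)) hlam.le
      _ = poissonE lam (fun i => (i : ℝ) ^ α) :=
          (poissonE_rpow_eq_mul hlam.le hα0.ne' hα1).symm
  have hnonneg := poissonE_nonneg hlam.le fun i => rpow_nonneg (Nat.cast_nonneg i) α
  refine ⟨?_, hupper⟩
  rw [abs_sub_comm, abs_of_nonneg (sub_nonneg.2 hupper), le_min_iff]
  constructor <;> linarith
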